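/- Let B be an NFA with finite state set Q and finite alphabet Σ, and let Basic(B) be the NFA on Q whose alphabet consists of those x ∈ Σ such that it is not the case that δ(q,x) ⊆ {q} for all q ∈ Q, and such that there is no y ∈ Σ with x < y (i.e., δ(q,x) ⊆ δ(q,y) for all q and δ(q,x) ≠ δ(q,y) for some q), with the transitions inherited from B. Then B is D3-directing if and only if Basic(B) is D3-directing, and in that case the shortest D3-directing word of B has the same length as the shortest D3-directing word of Basic(B), i.e., d₃(B) = d₃(Basic(B)). -/

import Mathlib

/-!
Every symbol `x` of `B` either acts inside the identity relation, or lies below a maximal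
symbol `y` that does not; the latter is a symbol of `Basic(B)`. Deleting the letters of the
first kind and replacing each other letter by such a `y` yields a word over `Basic(B)` that is
no longer, and since the action `S·w` is monotone in `S` and in every letter, the new word
reaches from every state at least the states reached before. So a D3-directing word of `B`
becomes one of `Basic(B)` of at most the same length.
-/

/-- Action of an NFA transition function on a subset of states along a word. -/
def nfaRun {n m : ℕ} (δ : Fin n → Fin m → Finset (Fin n)) :
    Finset (Fin n) → List (Fin m) → Finset (Fin n)
  | S, [] => S
  | S, a :: w => nfaRun δ (S.biUnion fun q => δ q a) w

/-- The word `w` is D3-directing for the NFA `δ`: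
the intersection `⋂_{q ∈ Q} q·w` is nonempty. -/
def nfaD3word {n m : ℕ} (δ : Fin n → Fin m → Finset (Fin n)) (w : List (Fin m)) : Prop :=
  ∃ r : Fin n, ∀ q : Fin n, r ∈ nfaRun δ {q} w

/-- `x < y` for symbols of an NFA: `δ q x ⊆ δ q y` for all `q`, with strict
inclusion somewhere. -/
def nfaSymLt {n m : ℕ} (δ : Fin n → Fin m → Finset (Fin n)) (x y : Fin m) : Prop :=
  (∀ q, δ q x ⊆ δ q y) ∧ (∃ q, δ q x ≠ δ q y)

/-- `x` is a symbol of `Basic(B)`: `x ≰ Id_Q` and `x` is not strictly below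
any other symbol. -/
def nfaBasicSym {n m : ℕ} (δ : Fin n → Fin m → Finset (Fin n)) (x : Fin m) : Prop :=
  ¬ (∀ q, δ q x ⊆ {q}) ∧ ¬ ∃ y, nfaSymLt δ x y

section

variable {n m : ℕ} (δ : Fin n → Fin m → Finset (Fin n))

lemma nfaSymLt_iff_lt {x y : Fin m} :
    nfaSymLt δ x y ↔ (fun q => δ q x) < (fun q => δ q y) := by
  rw [lt_iff_le_and_ne, Ne, funext_iff, not_forall]
  rfl

lemma le_id_or_exists_basicSym_le (x : Fin m) :
    (∀ q, δ q x ⊆ {q}) ∨ ∃ y, nfaBasicSym δ y ∧ ∀ q, δ q x ⊆ δ q y := by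
  obtain ⟨f, hxf, hf⟩ := Finite.exists_le_maximal (p := (· ∈ Set.range fun y q => δ q y))
    (Set.mem_range_self x)
  obtain ⟨y, rfl⟩ := hf.prop
  have hy_max : ¬ ∃ z, nfaSymLt δ y z := fun ⟨z, hyz⟩ =>
    hf.not_gt (Set.mem_range_self z) ((nfaSymLt_iff_lt δ).1 hyz)
  by_cases hy_id : ∀ q, δ q y ⊆ {q}
  · exact Or.inl fun q => (hxf q).trans (hy_id q)
  · exact Or.inr ⟨y, ⟨hy_id, hy_max⟩, hxf⟩

lemma nfaRun_mono {S T : Finset (Fin n)} (hST : S ⊆ T) (w : List (Fin m)) :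
    nfaRun δ S w ⊆ nfaRun δ T w := by
  induction w generalizing S T with
  | nil => exact hST
  | cons a w ih => exact ih (Finset.biUnion_subset_biUnion_of_subset_left _ hST)

lemma exists_basic_word_length_le_nfaRun_subset (w : List (Fin m)) :
    ∃ w', w'.length ≤ w.length ∧ (∀ x ∈ w', nfaBasicSym δ x) ∧
      ∀ S, nfaRun δ S w ⊆ nfaRun δ S w' := by
  induction w with
  | nil => exact ⟨[], le_rfl, by simp, fun _ => subset_rfl⟩
  | cons x w ih =>
    obtain ⟨w', hlen, hbasic, hrun⟩ := ih
    rcases le_id_or_exists_basicSym_le δ x with hx_id | ⟨y, hy, hxy⟩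
    · refine ⟨w', Nat.le_succ_of_le hlen, hbasic, fun S => ?_⟩
      have hSx : (S.biUnion fun q => δ q x) ⊆ S :=
        Finset.biUnion_subset.2 fun q hq r hr => Finset.mem_singleton.1 (hx_id q hr) ▸ hq
      exact (nfaRun_mono δ hSx w).trans (hrun S)
    · refine ⟨y :: w', Nat.succ_le_succ hlen, List.forall_mem_cons.2 ⟨hy, hbasic⟩, fun S => ?_⟩
      have hSxy : (S.biUnion fun q => δ q x) ⊆ S.biUnion fun q => δ q y :=
        Finset.biUnion_mono fun q _ => hxy q
      exact (nfaRun_mono δ hSxy w).trans (hrun _)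

lemma exists_basic_nfaD3word_length_le {w : List (Fin m)} (hw : nfaD3word δ w) :
    ∃ w', w'.length ≤ w.length ∧ (∀ x ∈ w', nfaBasicSym δ x) ∧ nfaD3word δ w' := by
  obtain ⟨w', hlen, hbasic, hrun⟩ := exists_basic_word_length_le_nfaRun_subset δ w
  obtain ⟨r, hr⟩ := hw
  exact ⟨w', hlen, hbasic, r, fun q => hrun {q} (hr q)⟩

end

theorem stmt14 (n m : ℕ) (δ : Fin n → Fin m → Finset (Fin n)) :
    -- B is D3-directing iff Basic(B) is D3-directing
    ((∃ w, nfaD3word δ w) ↔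
      (∃ w, (∀ x ∈ w, nfaBasicSym δ x) ∧ nfaD3word δ w)) ∧
    -- and in that case d₃(B) = d₃(Basic(B))
    ((∃ w, nfaD3word δ w) →
      sInf {l : ℕ | ∃ w, w.length = l ∧ nfaD3word δ w} =
        sInf {l : ℕ | ∃ w, w.length = l ∧ (∀ x ∈ w, nfaBasicSym δ x) ∧
          nfaD3word δ w}) := by
  refine ⟨⟨fun ⟨w, hw⟩ => ?_, fun ⟨w, _, hw⟩ => ⟨w, hw⟩⟩, fun _ => ?_⟩
  · obtain ⟨w', -, hbasic, hw'⟩ := exists_basic_nfaD3word_length_le δ hw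
    exact ⟨w', hbasic, hw'⟩
  refine csInf_eq_csInf_of_forall_exists_le (fun l ⟨w, hl, hw⟩ => ?_)
    (fun l ⟨w, hl, _, hw⟩ => ⟨l, ⟨w, hl, hw⟩, le_rfl⟩)
  obtain ⟨w', hlen, hbasic, hw'⟩ := exists_basic_nfaD3word_length_le δ hw
  exact ⟨w'.length, ⟨w', rfl, hbasic, hw'⟩, hl ▸ hlen⟩
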